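/- arXiv:1407.7726 — 4 statements merged into one kernel-verified Lean document; each statement's English description precedes it below -/
import Mathlib

section
/- For all positive integers k, the k-th Genocchi number satisfies G_k = (-1)^k * k * ∑_{m=1}^{k} (-1)^m * (m-1)! / 2^{m-1} * S(k,m), where S(k,m) denotes the Stirling number of the second kind. -/
/-!
Let `F(t) = log((1 + eᵗ)/2)`. Expanding the logarithm in powers of `(eᵗ - 1)/2` and using
`(eᵗ - 1)ᵐ = m! ∑ₙ S(n, m) tⁿ/n!` gives
`n! [tⁿ] F = -½ ∑ₘ (-1)ᵐ (m-1)!/2^(m-1) S(n, m)`.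
On the other hand `F' = eᵗ/(eᵗ + 1)`, so `-2t F'(t) = -2t eᵗ/(eᵗ + 1) = 2(-t)/(e⁻ᵗ + 1)`
is the Genocchi generating function evaluated at `-t`; comparing coefficients of `tᵏ` gives
the formula.
-/

/-- Stirling numbers of the second kind. -/
def stirling2 : ℕ → ℕ → ℕ
  | 0, 0 => 1
  | 0, _ + 1 => 0
  | _ + 1, 0 => 0
  | n + 1, k + 1 => (k + 1) * stirling2 n (k + 1) + stirling2 n k

open Finset PowerSeries
open scoped Nat

namespace PowerSeries

theorem coeff_pow_eq_zero_of_lt {R : Type*} [Semiring R] {g : R⟦X⟧} (hg : constantCoeff g = 0)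
    {n d : ℕ} (h : n < d) : coeff n (g ^ d) = 0 :=
  coeff_of_lt_order n ((Nat.cast_lt.2 h).trans_le (le_order_pow_of_constantCoeff_eq_zero d hg))

variable {A : Type*} [CommRing A] [Algebra ℚ A]

theorem derivative_exp_sub_one_pow_succ (m : ℕ) :
    d⁄dX A ((exp A - 1) ^ (m + 1)) =
      C ((m + 1 : ℕ) : A) * ((exp A - 1) ^ (m + 1) + (exp A - 1) ^ m) := by
  rw [derivative_pow, map_sub, derivative_exp, derivative_one, sub_zero, map_natCast]
  push_cast
  ring

theorem factorial_mul_coeff_exp_sub_one_pow : ∀ n m : ℕ,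
    (n ! : A) * coeff n ((exp A - 1) ^ m) = m ! * stirling2 n m
  | 0, 0 => by simp [stirling2]
  | 0, m + 1 => by simp [stirling2, constantCoeff_exp]
  | n + 1, 0 => by simp [stirling2, coeff_one]
  | n + 1, m + 1 => by
    calc ((n + 1)! : A) * coeff (n + 1) ((exp A - 1) ^ (m + 1))
        = n ! * coeff n (d⁄dX A ((exp A - 1) ^ (m + 1))) := by
          rw [coeff_derivative, Nat.factorial_succ]; push_cast; ring
      _ = (m + 1) * (n ! * coeff n ((exp A - 1) ^ (m + 1)) +
            n ! * coeff n ((exp A - 1) ^ m)) := by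
          rw [derivative_exp_sub_one_pow_succ, coeff_C_mul, map_add]; push_cast; ring
      _ = (m + 1)! * stirling2 (n + 1) (m + 1) := by
          rw [factorial_mul_coeff_exp_sub_one_pow n (m + 1),
            factorial_mul_coeff_exp_sub_one_pow n m, stirling2, Nat.factorial_succ]
          push_cast; ring

theorem coeff_logOf {f : A⟦X⟧} (hf : constantCoeff f = 1) (n : ℕ) :
    coeff n (logOf f) =
      ∑ m ∈ Icc 1 n, algebraMap ℚ A ((-1) ^ (m + 1) / m) * coeff n ((f - 1) ^ m) := by
  have hg : constantCoeff (f - 1) = 0 := by rw [map_sub, hf, map_one, sub_self]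
  rw [logOf_eq, coeff_subst' (HasSubst.of_constantCoeff_zero' hg),
    finsum_eq_sum_of_support_subset _ (s := Icc 1 n)]
  · refine sum_congr rfl fun m hm => ?_
    rw [coeff_log, if_neg (by grind), smul_eq_mul]
  · intro m hm
    rw [Function.mem_support] at hm
    have hm0 : m ≠ 0 := fun h => hm (by simp [h])
    have hmn : m ≤ n := by
      by_contra! h
      exact hm (by rw [coeff_pow_eq_zero_of_lt hg h, smul_zero])
    simp only [coe_Icc, Set.mem_Icc]
    omega

theorem derivative_log_mul_one_add_X : d⁄dX A (log A) * (1 + X) = 1 := by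
  ext n
  rw [deriv_log, mul_add, mul_one, map_add]
  cases n with
  | zero => simp
  | succ n => simp [coeff_succ_mul_X, coeff_one, pow_succ]

theorem derivative_logOf_mul {f : A⟦X⟧} (hf : constantCoeff f = 1) :
    d⁄dX A (logOf f) * f = d⁄dX A f := by
  have hsub : HasSubst (f - 1) :=
    HasSubst.of_constantCoeff_zero' (by rw [map_sub, hf, map_one, sub_self])
  have h1 : (1 : A⟦X⟧).subst (f - 1) = 1 := by simpa using subst_C (S := A) (a := f - 1) 1
  have hinv : (d⁄dX A (log A)).subst (f - 1) * f = 1 :=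
    calc (d⁄dX A (log A)).subst (f - 1) * f
        = (d⁄dX A (log A) * (1 + X)).subst (f - 1) := by
          rw [subst_mul hsub, subst_add hsub, subst_X hsub, h1, add_sub_cancel]
      _ = 1 := by rw [derivative_log_mul_one_add_X, h1]
  rw [logOf_eq, derivative_subst hsub, mul_right_comm, hinv, one_mul, map_sub, derivative_one,
    sub_zero]

theorem evalNegHom_mul_exp_add_one {g : A⟦X⟧} (hg : g * (exp A + 1) = 2 * X) :
    evalNegHom g * (exp A + 1) = -2 * X * exp A := by
  have h := congrArg evalNegHom hg
  rw [map_mul, map_add, map_one, map_mul, map_ofNat, evalNegHom_X] at h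
  linear_combination exp A * h - evalNegHom g * exp_mul_exp_neg_eq_one (A := A)

end PowerSeries

noncomputable def halfExpAddOne : ℚ⟦X⟧ := C 2⁻¹ * (exp ℚ + 1)

theorem constantCoeff_halfExpAddOne : constantCoeff halfExpAddOne = 1 := by
  norm_num [halfExpAddOne, constantCoeff_exp]

theorem halfExpAddOne_sub_one : halfExpAddOne - 1 = C 2⁻¹ * (exp ℚ - 1) := by
  have h : C (2⁻¹ : ℚ) * 2 = 1 := by rw [← map_ofNat C 2, ← map_mul]; norm_num
  rw [halfExpAddOne]
  linear_combination h

theorem factorial_mul_coeff_logOf_halfExpAddOne (n : ℕ) :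
    (n ! : ℚ) * coeff n (logOf halfExpAddOne) =
      -2⁻¹ * ∑ m ∈ Icc 1 n, (-1) ^ m * ((m - 1)! : ℚ) / 2 ^ (m - 1) * stirling2 n m := by
  rw [coeff_logOf constantCoeff_halfExpAddOne, mul_sum, mul_sum, halfExpAddOne_sub_one]
  refine sum_congr rfl fun m hm => ?_
  obtain ⟨m, rfl⟩ : ∃ j, m = j + 1 := ⟨m - 1, by grind⟩
  rw [mul_pow, ← map_pow, coeff_C_mul, Algebra.algebraMap_self, RingHom.id_apply]
  calc _ = (-1) ^ (m + 1 + 1) / (m + 1 : ℕ) * 2⁻¹ ^ (m + 1) *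
        ((n ! : ℚ) * coeff n ((exp ℚ - 1) ^ (m + 1))) := by ring
    _ = _ := by
      rw [factorial_mul_coeff_exp_sub_one_pow, Nat.factorial_succ, add_tsub_cancel_right]
      push_cast
      rw [inv_pow]
      field_simp
      ring

theorem derivative_halfExpAddOne : d⁄dX ℚ halfExpAddOne = C 2⁻¹ * exp ℚ := by
  rw [halfExpAddOne, Derivation.leibniz, derivative_C, smul_zero, add_zero, map_add,
    derivative_exp, derivative_one, add_zero, smul_eq_mul]

theorem derivative_logOf_halfExpAddOne_mul :
    d⁄dX ℚ (logOf halfExpAddOne) * (exp ℚ + 1) = exp ℚ := by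
  have h := derivative_logOf_mul constantCoeff_halfExpAddOne
  rw [derivative_halfExpAddOne] at h
  refine mul_left_cancel₀ (by simp : C (2⁻¹ : ℚ) ≠ 0) ?_
  calc C 2⁻¹ * (d⁄dX ℚ (logOf halfExpAddOne) * (exp ℚ + 1))
      = d⁄dX ℚ (logOf halfExpAddOne) * halfExpAddOne := by rw [halfExpAddOne]; ring
    _ = C 2⁻¹ * exp ℚ := h

theorem exp_add_one_ne_zero : exp ℚ + 1 ≠ 0 := fun h => by
  simpa [constantCoeff_exp] using congrArg constantCoeff h

/-- Main theorem: for Genocchi numbers `G` (defined by the EGF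
`2t/(e^t+1) = ∑_{n≥1} G_n t^n/n!`) and all `k ≥ 1`,
`G_k = (-1)^k k ∑_{m=1}^k (-1)^m (m-1)!/2^{m-1} S(k,m)`. -/
theorem genocchi_eq_sum_stirling2
    (G : ℕ → ℚ)
    (hG : (PowerSeries.mk fun n => G n / n.factorial) * (PowerSeries.exp ℚ + 1)
        = 2 * PowerSeries.X) :
    ∀ k : ℕ, 1 ≤ k →
      G k = (-1) ^ k * k * ∑ m ∈ Finset.Icc 1 k,
        (-1) ^ m * ((m - 1).factorial : ℚ) / 2 ^ (m - 1) * stirling2 k m := by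
  have hGF : evalNegHom (mk fun n => G n / n !) = -2 * X * d⁄dX ℚ (logOf halfExpAddOne) := by
    refine mul_right_cancel₀ exp_add_one_ne_zero ?_
    rw [evalNegHom_mul_exp_add_one hG, mul_assoc (-2 * X), derivative_logOf_halfExpAddOne_mul]
  intro k hk
  obtain ⟨j, rfl⟩ := Nat.exists_eq_add_of_le' hk
  have hcoeff := congrArg (coeff (j + 1)) hGF
  rw [evalNegHom, coeff_rescale, coeff_mk, mul_assoc, neg_mul, two_mul, map_neg, map_add,
    coeff_succ_X_mul, coeff_derivative, div_eq_mul_inv] at hcoeff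
  have hF := factorial_mul_coeff_logOf_halfExpAddOne (j + 1)
  have hsign : ((-1 : ℚ) ^ (j + 1)) ^ 2 = 1 := by rw [pow_right_comm, neg_one_sq, one_pow]
  have hfac : ((j + 1)! : ℚ) * ((j + 1)! : ℚ)⁻¹ = 1 := mul_inv_cancel₀ (by positivity)
  -- `hcoeff` says `(-1)ᵏ G k / k! = -2k [tᵏ] F`: multiply it by `(-1)ᵏ k!` and insert `hF`.
  push_cast
  linear_combination (-1) ^ (j + 1) * ((j + 1)! : ℚ) * hcoeff - 2 * (-1) ^ (j + 1) * (j + 1) * hF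
    - G (j + 1) * hsign - G (j + 1) * ((-1) ^ (j + 1)) ^ 2 * hfac
end

section
/- For all nonnegative integers n, B_n = ∑_{k=0}^{n} 1/(k+1) * ∑_{j=0}^{k} (-1)^j * C(k,j) * j^n, where B_n is the n-th Bernoulli number (with the convention 0^0 = 1). -/
/-!
Write `Δ f x = f (x + 1) - f x`. The inner sum is `(-1)^k Δ^k xⁿ` at `0`, so the right-hand side
is `a n = ∑_k (-1)^k Δ^k xⁿ (0) / (k + 1)`, and it suffices to show that `a` satisfies the
recurrence `∑_{n ≤ m} C(m+1, n) a n = [m = 0]` that determines the Bernoulli numbers.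
As `∑_{n ≤ m} C(m+1, n) xⁿ = Δ x^(m+1)`, the left-hand side is
`∑_k (-1)^k Δ^(k+1) x^(m+1) (0) / (k + 1)`. The discrete Leibniz rule
`Δ^(k+1) (x f) (0) = (k + 1) Δ^k f (1)` turns this into `∑_{k ≤ m} (-1)^k Δ^k x^m (1)`, which
telescopes, because `Δ^k f (1) = Δ^k f (0) + Δ^(k+1) f (0)`, to `0^m`.
-/

open Finset fwdDiff

-- `Δ_[h] ^[k]` needs the space: `]^` is a token of the exterior power notation `⋀[R]^n`.

theorem sum_range_neg_one_pow_fwdDiff_iter_add {M G : Type*} [AddCommMonoid M] [AddCommGroup G]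
    (h : M) (f : M → G) (y : M) (n : ℕ) :
    ∑ k ∈ range n, (-1 : ℤ) ^ k • Δ_[h] ^[k] f (y + h) = f y - (-1 : ℤ) ^ n • Δ_[h] ^[n] f y := by
  have step (k : ℕ) : (-1 : ℤ) ^ k • Δ_[h] ^[k] f (y + h) =
      (-1 : ℤ) ^ k • Δ_[h] ^[k] f y - (-1 : ℤ) ^ (k + 1) • Δ_[h] ^[k + 1] f y := by
    rw [Function.iterate_succ_apply', fwdDiff, pow_succ, mul_neg_one, neg_smul, sub_neg_eq_add,
      smul_sub, add_sub_cancel]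
  simp only [step, sum_range_sub', pow_zero, one_smul, Function.iterate_zero_apply]

theorem fwdDiff_iter_succ_mul_self {R : Type*} [CommRing R] (h : R) (f : R → R) (k : ℕ) (y : R) :
    Δ_[h] ^[k + 1] (fun x ↦ x * f x) y =
      y * Δ_[h] ^[k + 1] f y + (k + 1) * h * Δ_[h] ^[k] f (y + h) := by
  induction k generalizing y with
  | zero =>
    simp only [Function.iterate_succ_apply', Function.iterate_zero_apply, fwdDiff]
    push_cast
    ring
  | succ k ih =>
    rw [Function.iterate_succ_apply', funext ih]
    simp only [fwdDiff, Function.iterate_succ_apply']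
    push_cast
    ring

theorem fwdDiff_pow_succ {R : Type*} [CommRing R] (m : ℕ) :
    Δ_[1] (fun x : R ↦ x ^ (m + 1)) =
      ∑ n ∈ range (m + 1), (m + 1).choose n • fun x : R ↦ x ^ n := by
  ext x
  simp [nsmul_eq_mul, fwdDiff, add_pow, sum_range_succ, mul_comm]

theorem sum_neg_one_pow_mul_choose_mul_pow {R : Type*} [CommRing R] (k n : ℕ) :
    ∑ j ∈ range (k + 1), (-1) ^ j * (k.choose j : R) * (j : R) ^ n =
      (-1) ^ k * Δ_[1] ^[k] (fun x : R ↦ x ^ n) 0 := by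
  rw [fwdDiff_iter_eq_sum_shift, mul_sum]
  refine sum_congr rfl fun j hj ↦ ?_
  obtain ⟨i, rfl⟩ := Nat.exists_eq_add_of_le (mem_range_succ_iff.mp hj)
  simp only [zsmul_eq_mul, nsmul_eq_mul, Nat.add_sub_cancel_left, zero_add, mul_one]
  push_cast
  have hsq : ((-1 : R) ^ i) * (-1) ^ i = 1 := by rw [← pow_add, Even.neg_one_pow ⟨i, rfl⟩]
  linear_combination (-(-1) ^ j * ((j + i).choose j : R) * (j : R) ^ n) * hsq

theorem eq_bernoulli_of_sum_choose_mul {a : ℕ → ℚ}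
    (ha : ∀ n, ∑ k ∈ range n, (n.choose k : ℚ) * a k = if n = 1 then 1 else 0) (n : ℕ) :
    a n = bernoulli n := by
  induction n using Nat.strong_induction_on with
  | _ n ih =>
    have hsum := (ha (n + 1)).trans (sum_bernoulli (n + 1)).symm
    rw [sum_range_succ, sum_range_succ, sum_congr rfl fun k hk ↦ by rw [ih k (mem_range.mp hk)],
      add_right_inj, Nat.choose_succ_self_right] at hsum
    exact mul_left_cancel₀ (by positivity) hsum

def bernoulliFwdDiff (n : ℕ) : ℚ :=
  ∑ k ∈ range (n + 1), (-1) ^ k / (k + 1) * Δ_[1] ^[k] (fun x : ℚ ↦ x ^ n) 0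

theorem bernoulliFwdDiff_eq_sum_range {n N : ℕ} (hN : n < N) :
    bernoulliFwdDiff n = ∑ k ∈ range N, (-1) ^ k / (k + 1) * Δ_[1] ^[k] (fun x : ℚ ↦ x ^ n) 0 :=
  (eventually_constant_sum (fun k hk ↦ by rw [fwdDiff_iter_pow_eq_zero_of_lt hk]; simp) hN).symm

theorem sum_choose_mul_bernoulliFwdDiff (n : ℕ) :
    ∑ k ∈ range n, (n.choose k : ℚ) * bernoulliFwdDiff k = if n = 1 then 1 else 0 := by
  rcases n with _ | m
  · simp
  have hΔ (k : ℕ) : Δ_[1] ^[k + 1] (fun x : ℚ ↦ x ^ (m + 1)) 0 =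
      ∑ n ∈ range (m + 1), ((m + 1).choose n : ℚ) * Δ_[1] ^[k] (fun x : ℚ ↦ x ^ n) 0 := by
    rw [Function.iterate_succ_apply, fwdDiff_pow_succ, fwdDiff_iter_finsetSum, Finset.sum_apply]
    exact sum_congr rfl fun n _ ↦ by rw [fwdDiff_iter_const_smul, Pi.smul_apply, nsmul_eq_mul]
  calc ∑ n ∈ range (m + 1), ((m + 1).choose n : ℚ) * bernoulliFwdDiff n
      = ∑ k ∈ range (m + 1), (-1) ^ k / (k + 1) * Δ_[1] ^[k + 1] (fun x : ℚ ↦ x ^ (m + 1)) 0 := by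
        simp_rw [hΔ, mul_sum]
        rw [sum_comm]
        refine sum_congr rfl fun n hn ↦ ?_
        rw [bernoulliFwdDiff_eq_sum_range (mem_range.mp hn), mul_sum]
        exact sum_congr rfl fun k _ ↦ by ring
    _ = ∑ k ∈ range (m + 1), (-1 : ℤ) ^ k • Δ_[1] ^[k] (fun x : ℚ ↦ x ^ m) (0 + 1) := by
        refine sum_congr rfl fun k _ ↦ ?_
        simp_rw [pow_succ' _ m, fwdDiff_iter_succ_mul_self, zero_mul, zero_add, mul_one,
          zsmul_eq_mul]
        push_cast
        field_simp
    _ = if m + 1 = 1 then 1 else 0 := by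
        rw [sum_range_neg_one_pow_fwdDiff_iter_add, fwdDiff_iter_pow_eq_zero_of_lt m.lt_succ_self]
        simp [zero_pow_eq]

/-- `B_n = ∑_{k=0}^n 1/(k+1) ∑_{j=0}^k (-1)^j C(k,j) j^n` (with `0^0 = 1`). -/
theorem bernoulli_eq_double_sum (n : ℕ) :
    bernoulli n = ∑ k ∈ Finset.range (n + 1), (1 / (k + 1 : ℚ)) *
      ∑ j ∈ Finset.range (k + 1), (-1) ^ j * (k.choose j : ℚ) * (j : ℚ) ^ n := by
  rw [← eq_bernoulli_of_sum_choose_mul sum_choose_mul_bernoulliFwdDiff, bernoulliFwdDiff]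
  refine sum_congr rfl fun k _ ↦ ?_
  rw [sum_neg_one_pow_mul_choose_mul_pow]
  ring
end

section
/- For all nonnegative integers n, B_n = ∑_{j=0}^{n} (-1)^j * C(n+1, j+1) * n!/(n+j)! * ∑_{k=0}^{j} (-1)^{j-k} * C(j,k) * k^{n+j}, where B_n is the n-th Bernoulli number (convention 0^0 = 1). -/
/-!
Write `b = exp X - 1`, so that `B(X) * b = X` for the exponential generating function `B` of the
Bernoulli numbers. The binomial theorem gives
`X ^ (n + 1) - (X - b) ^ (n + 1) = b * ∑ j, (-1) ^ j * C(n + 1, j + 1) * X ^ (n - j) * b ^ j`,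
and multiplying by `B` turns the factor `b` into `X`. Since `X - b = O(X ^ 2)`, the coefficient of
`X ^ (2 * n + 1)` on the left is just `B_n / n!`. On the right it is a combination of coefficients
of the powers `b ^ j`, which expand as `b ^ j = ∑ k, (-1) ^ (j - k) * C(j, k) * exp (k X)`.
-/

open Finset PowerSeries Nat

theorem pow_succ_sub_sub_pow_succ {R : Type*} [CommRing R] (x y : R) (n : ℕ) :
    x ^ (n + 1) - (x - y) ^ (n + 1) =
      y * ∑ j ∈ range (n + 1), (-1) ^ j * ((n + 1).choose (j + 1) : R) * x ^ (n - j) * y ^ j := by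
  rw [sub_eq_neg_add x y, add_pow, sum_range_succ', mul_sum]
  simp only [Nat.add_sub_add_right, pow_zero, one_mul, Nat.sub_zero, choose_zero_right,
    Nat.cast_one, mul_one, sub_add_cancel_right, ← sum_neg_distrib]
  refine sum_congr rfl fun j _ => ?_
  ring

section Exp

variable {A : Type*} [CommRing A] [Algebra ℚ A]

theorem coeff_exp_sub_one_pow (j m : ℕ) :
    coeff m ((exp A - 1) ^ j) = algebraMap ℚ A
      ((∑ k ∈ range (j + 1), (-1) ^ (j - k) * (j.choose k : ℚ) * (k : ℚ) ^ m) / m !) := by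
  rw [sub_eq_add_neg, add_pow, map_sum, sum_div, map_sum]
  refine sum_congr rfl fun k _ => ?_
  rw [exp_pow_eq_rescale_exp, mul_assoc,
    show ((-1 : A⟦X⟧) ^ (j - k) * (j.choose k : A⟦X⟧)) = C ((-1) ^ (j - k) * (j.choose k : A)) by
      simp, coeff_mul_C, coeff_rescale, coeff_exp]
  simp [div_eq_mul_inv]
  ring

theorem X_sq_dvd_X_sub_exp_sub_one : (X : A⟦X⟧) ^ 2 ∣ X - (exp A - 1) := by
  rw [X_pow_dvd_iff]
  intro m hm
  interval_cases m <;> simp [coeff_exp]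

end Exp

theorem bernoulli_div_factorial_eq_sum_coeff_exp_sub_one_pow (n : ℕ) :
    bernoulli n / n ! = ∑ j ∈ range (n + 1),
      (-1) ^ j * ((n + 1).choose (j + 1) : ℚ) * coeff (n + j) ((exp ℚ - 1) ^ j) := by
  set b : ℚ⟦X⟧ := exp ℚ - 1
  have hX : bernoulliPowerSeries ℚ * (X ^ (n + 1) - (X - b) ^ (n + 1)) = X *
      ∑ j ∈ range (n + 1), (-1) ^ j * ((n + 1).choose (j + 1) : ℚ⟦X⟧) * X ^ (n - j) * b ^ j := by
    rw [pow_succ_sub_sub_pow_succ, ← mul_assoc, bernoulliPowerSeries_mul_exp_sub_one]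
  -- `X - b` is divisible by `X ^ 2`, so `(X - b) ^ (n + 1)` starts in degree `2 * n + 2`.
  have hvanish : coeff (2 * n + 1) (bernoulliPowerSeries ℚ * (X - b) ^ (n + 1)) = 0 := by
    have hdvd : X ^ (2 * (n + 1)) ∣ bernoulliPowerSeries ℚ * (X - b) ^ (n + 1) := by
      rw [pow_mul]
      exact (pow_dvd_pow_of_dvd X_sq_dvd_X_sub_exp_sub_one _).mul_left _
    exact X_pow_dvd_iff.mp hdvd _ (by omega)
  have hB : coeff (2 * n + 1) (bernoulliPowerSeries ℚ * X ^ (n + 1)) = bernoulli n / n ! := by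
    rw [show 2 * n + 1 = n + (n + 1) by omega, coeff_mul_X_pow]
    simp [bernoulliPowerSeries]
  have hcoeff : bernoulli n / n ! =
      coeff (2 * n + 1) (bernoulliPowerSeries ℚ * (X ^ (n + 1) - (X - b) ^ (n + 1))) := by
    rw [mul_sub, map_sub, hvanish, hB, sub_zero]
  rw [hcoeff, hX, coeff_succ_X_mul, map_sum]
  refine sum_congr rfl fun j hj => ?_
  have hjn : j ≤ n := Nat.lt_succ_iff.mp (mem_range.mp hj)
  rw [show ((-1) ^ j * ((n + 1).choose (j + 1) : ℚ⟦X⟧)) =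
      C ((-1) ^ j * ((n + 1).choose (j + 1) : ℚ)) by simp, mul_assoc, coeff_C_mul,
    show 2 * n = n + j + (n - j) by omega, coeff_X_pow_mul]

/-- `B_n = ∑_{j=0}^n (-1)^j C(n+1,j+1) n!/(n+j)! ∑_{k=0}^j (-1)^{j-k} C(j,k) k^{n+j}`
(with `0^0 = 1`). -/
theorem bernoulli_eq_gould_double_sum (n : ℕ) :
    bernoulli n = ∑ j ∈ Finset.range (n + 1),
      (-1) ^ j * ((n + 1).choose (j + 1) : ℚ) * (n.factorial : ℚ) / ((n + j).factorial : ℚ) *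
        ∑ k ∈ Finset.range (j + 1), (-1) ^ (j - k) * (j.choose k : ℚ) * (k : ℚ) ^ (n + j) := by
  have hn : (n ! : ℚ) ≠ 0 := by positivity
  rw [← div_mul_cancel₀ (bernoulli n) hn, bernoulli_div_factorial_eq_sum_coeff_exp_sub_one_pow,
    sum_mul]
  refine sum_congr rfl fun j _ => ?_
  rw [coeff_exp_sub_one_pow, Algebra.algebraMap_self, RingHom.id_apply]
  ring
end

section
/- For every nonnegative integer k and real numbers λ ≠ 0, α ≠ 0, and t such that λe^{αt} ≠ 1, the k-th derivative of f(t) = 1/(λe^{αt}-1) satisfies f^{(k)}(t) = (-1)^k α^k ∑_{m=1}^{k+1} (m-1)! S(k+1,m) (1/(λe^{αt}-1))^m, where S denotes Stirling numbers of the second kind. -/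
open Polynomial Finset Nat Filter Topology

theorem stirling2_eq_zero_of_lt : ∀ {n m : ℕ}, n < m → stirling2 n m = 0
  | 0, _ + 1, _ => rfl
  | n + 1, m + 1, h => by
    simp only [stirling2, stirling2_eq_zero_of_lt (by omega : n < m + 1),
      stirling2_eq_zero_of_lt (by omega : n < m), mul_zero]

section AutonomousODE

variable {𝕜 : Type*} [NontriviallyNormedField 𝕜]

theorem iteratedDeriv_eq_eval_of_hasDerivAt_eval {f : 𝕜 → 𝕜} {U : Set 𝕜} (hU : IsOpen U)
    {Q : 𝕜[X]} (hf : ∀ s ∈ U, HasDerivAt f (Q.eval (f s)) s) (P : ℕ → 𝕜[X])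
    (hP₀ : P 0 = X) (hP : ∀ k, P (k + 1) = Q * derivative (P k)) (k : ℕ) :
    ∀ s ∈ U, iteratedDeriv k f s = (P k).eval (f s) := by
  induction k with
  | zero => simp [hP₀]
  | succ k ih =>
    intro s hs
    have hlocal : iteratedDeriv k f =ᶠ[𝓝 s] fun u => (P k).eval (f u) :=
      eventually_of_mem (hU.mem_nhds hs) ih
    have hchain := ((P k).hasDerivAt (f s)).comp s (hf s hs)
    rw [iteratedDeriv_succ, hlocal.deriv_eq, hP, eval_mul, mul_comm]
    exact hchain.deriv

end AutonomousODE

section StirlingPoly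

variable (R : Type*) [CommSemiring R]

noncomputable def stirlingPoly (n : ℕ) : R[X] :=
  ∑ m ∈ Icc 1 (n + 1), C (((m - 1)! * stirling2 (n + 1) m : ℕ) : R) * X ^ m

theorem stirlingPoly_eq_sum_range (n : ℕ) :
    stirlingPoly R n =
      ∑ i ∈ range (n + 1), C ((i ! * stirling2 (n + 1) (i + 1) : ℕ) : R) * X ^ (i + 1) := by
  rw [stirlingPoly, ← Ico_add_one_right_eq_Icc, sum_Ico_eq_sum_range]
  simp [Nat.add_comm 1]

theorem stirlingPoly_zero : stirlingPoly R 0 = X := by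
  simp [stirlingPoly, stirling2]

theorem stirlingPoly_succ (n : ℕ) :
    stirlingPoly R (n + 1) = (X + X ^ 2) * derivative (stirlingPoly R n) := by
  have hS : ∀ i, (i ! * stirling2 (n + 2) (i + 1) : ℕ)
      = (i + 1)! * stirling2 (n + 1) (i + 1) + i ! * stirling2 (n + 1) i := fun i => by
    rw [factorial_succ, stirling2]; ring
  rw [stirlingPoly_eq_sum_range, stirlingPoly_eq_sum_range, derivative_sum, mul_sum]
  simp only [hS, Nat.cast_add, C_add, add_mul, sum_add_distrib, derivative_C_mul_X_pow,
    add_tsub_cancel_right]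
  rw [sum_range_succ _ (n + 1), sum_range_succ' _ (n + 1),
    stirling2_eq_zero_of_lt (lt_add_one (n + 1)), show stirling2 (n + 1) 0 = 0 from rfl]
  simp only [mul_zero, Nat.cast_zero, C_0, zero_mul, add_zero]
  congr 1 <;> refine sum_congr rfl fun i _ => ?_ <;>
    simp only [factorial_succ, Nat.cast_mul, Nat.cast_add, Nat.cast_one, C_mul, C_add, C_1] <;> ring

end StirlingPoly

theorem hasDerivAt_one_div_mul_exp_sub_one (lam α s : ℝ) (hs : lam * Real.exp (α * s) ≠ 1) :
    HasDerivAt (fun u => 1 / (lam * Real.exp (α * u) - 1))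
      (-α * (1 / (lam * Real.exp (α * s) - 1) + (1 / (lam * Real.exp (α * s) - 1)) ^ 2)) s := by
  have hD : lam * Real.exp (α * s) - 1 ≠ 0 := sub_ne_zero.mpr hs
  have hden :
      HasDerivAt (fun u => lam * Real.exp (α * u) - 1) (lam * (Real.exp (α * s) * α)) s :=
    (((hasDerivAt_id s).const_mul α).exp.const_mul lam).sub_const 1 |>.congr_deriv (by simp)
  simp only [one_div]
  refine (hden.inv hD).congr_deriv ?_
  field_simp
  ring

theorem iteratedDeriv_one_div_lambda_exp_sub_one_general
    (k : ℕ) (lam α t : ℝ)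
    (ht : lam * Real.exp (α * t) ≠ 1) :
    iteratedDeriv k (fun s => 1 / (lam * Real.exp (α * s) - 1)) t
      = (-1) ^ k * α ^ k * ∑ m ∈ Finset.Icc 1 (k + 1),
          ((m - 1).factorial : ℝ) * (stirling2 (k + 1) m : ℝ) *
            (1 / (lam * Real.exp (α * t) - 1)) ^ m := by
  have hU : IsOpen {s : ℝ | lam * Real.exp (α * s) ≠ 1} :=
    isOpen_ne_fun (by fun_prop) continuous_const
  have hg : ∀ s ∈ {s : ℝ | lam * Real.exp (α * s) ≠ 1},
      HasDerivAt (fun s => 1 / (lam * Real.exp (α * s) - 1))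
        ((C (-α) * (X + X ^ 2)).eval (1 / (lam * Real.exp (α * s) - 1))) s := fun s hs => by
    simpa only [eval_mul, eval_C, eval_add, eval_pow, eval_X]
      using hasDerivAt_one_div_mul_exp_sub_one lam α s hs
  rw [iteratedDeriv_eq_eval_of_hasDerivAt_eval hU hg (fun k => C ((-α) ^ k) * stirlingPoly ℝ k)
    (by simp [stirlingPoly_zero])
    (fun k => by rw [stirlingPoly_succ, derivative_C_mul, pow_succ, C_mul]; ring) k t ht]
  simp only [stirlingPoly, eval_mul, eval_C, eval_finsetSum, eval_pow, eval_X, Nat.cast_mul]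
  rw [neg_pow]

/-- For `λ ≠ 0`, `α ≠ 0` and `t` with `λ e^{αt} ≠ 1`, the `k`-th derivative of
`1/(λe^{αt}-1)` equals `(-1)^k α^k ∑_{m=1}^{k+1} (m-1)! S(k+1,m) (1/(λe^{αt}-1))^m`. -/
theorem iteratedDeriv_one_div_lambda_exp_sub_one
    (k : ℕ) (lam α t : ℝ) (hlam : lam ≠ 0) (hα : α ≠ 0)
    (ht : lam * Real.exp (α * t) ≠ 1) :
    iteratedDeriv k (fun s => 1 / (lam * Real.exp (α * s) - 1)) t
      = (-1) ^ k * α ^ k * ∑ m ∈ Finset.Icc 1 (k + 1),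
          ((m - 1).factorial : ℝ) * (stirling2 (k + 1) m : ℝ) *
            (1 / (lam * Real.exp (α * t) - 1)) ^ m :=
  iteratedDeriv_one_div_lambda_exp_sub_one_general k lam α t ht
end
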